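/- arXiv:1007.1199 — 2 statements merged into one kernel-verified Lean document; each statement's English description precedes it below -/
import Mathlib

section
/- Let L and K be De Morgan algebras defined on algebraic lattices and let φ be an order-isomorphism from the poset of completely join-irreducible elements of L onto that of K satisfying φ(j*) = φ(j)* for all completely join-irreducible j. Then the map Φ(x) = ⋁ φ(J(x)), where J(x) is the set of completely join-irreducible elements below x, is an isomorphism of De Morgan algebras (a lattice isomorphism commuting with c). -/
def CompletelyJoinIrreducible {A : Type*} [CompleteLattice A] (j : A) : Prop :=
  ∀ S : Set A, j = sSup S → j ∈ S

def star {A : Type*} [CompleteLattice A] (c : A → A) (j : A) : A :=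
  sInf {x : A | ¬ x ≤ c j}

/-! In an algebraic lattice with an antitone involution `c`, `c` sends an element maximal among
those not above a compact element to a completely join-irreducible, so every element is the join
of the completely join-irreducibles below it; with distributivity and compactness these are
completely join-prime. Hence `Φ` reflects order and is onto, and comparing `Φ (c x)` with
`c (Φ x)` on completely join-irreducibles reduces, through `x ≤ c j ↔ ¬ j* ≤ x`, to
`φ (j*) = (φ j)*`. -/

theorem exists_maximal_not_le_of_isCompactElement {A : Type*} [CompleteLattice A] {k a : A}
    (hk : IsCompactElement k) (hka : ¬ k ≤ a) :
    ∃ m, a ≤ m ∧ Maximal (fun z => ¬ k ≤ z) m := by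
  refine zorn_le_nonempty₀ {z | ¬ k ≤ z} (fun C hC hchain y hy => ?_) a hka
  refine ⟨sSup C, fun hkC => ?_, fun z hz => le_sSup hz⟩
  obtain ⟨z, hz, hkz⟩ := (CompleteLattice.isCompactElement_iff_le_of_directed_sSup_le A k).1 hk
    C ⟨y, hy⟩ hchain.directedOn hkC
  exact hC hz hkz

section Involution

variable {A : Type*} [CompleteLattice A] {c : A → A}

theorem le_apply_comm (hc : Function.Involutive c) (hanti : ∀ x y : A, x ≤ y ↔ c y ≤ c x)
    (x y : A) : x ≤ c y ↔ y ≤ c x := by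
  rw [hanti, hc]

theorem apply_le_comm (hc : Function.Involutive c) (hanti : ∀ x y : A, x ≤ y ↔ c y ≤ c x)
    (x y : A) : c x ≤ y ↔ c y ≤ x := by
  rw [hanti, hc]

theorem apply_sInf_eq_sSup_image (hc : Function.Involutive c)
    (hanti : ∀ x y : A, x ≤ y ↔ c y ≤ c x) (S : Set A) :
    c (sInf S) = sSup (c '' S) := by
  refine le_antisymm ?_ (sSup_le ?_)
  · rw [hanti, hc]
    exact le_sInf fun s hs => (apply_le_comm hc hanti _ _).1 (le_sSup ⟨s, hs, rfl⟩)
  · rintro _ ⟨s, hs, rfl⟩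
    exact (hanti _ _).1 (sInf_le hs)

/-- Every element strictly below `c m` is sent strictly above `m`, hence above `k`. -/
theorem completelyJoinIrreducible_apply_of_maximal_not_le (hc : Function.Involutive c)
    (hanti : ∀ x y : A, x ≤ y ↔ c y ≤ c x) {k m : A} (hm : Maximal (fun z => ¬ k ≤ z) m) :
    CompletelyJoinIrreducible (c m) := by
  intro S hS
  by_contra hmS
  have hk : ∀ s ∈ S, s ≤ c k := by
    intro s hs
    have hms : m ≤ c s := (le_apply_comm hc hanti _ _).1 (hS ▸ le_sSup hs)
    rw [le_apply_comm hc hanti]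
    by_contra hks
    have hsm : c s = m := le_antisymm (hm.2 hks hms) hms
    exact hmS (by rwa [← hsm, hc])
  exact hm.1 ((hanti k m).2 (hS ▸ sSup_le hk))

theorem le_iff_forall_completelyJoinIrreducible_le [IsCompactlyGenerated A]
    (hc : Function.Involutive c) (hanti : ∀ x y : A, x ≤ y ↔ c y ≤ c x) {x y : A} :
    x ≤ y ↔ ∀ j, CompletelyJoinIrreducible j → j ≤ x → j ≤ y := by
  refine ⟨fun h j _ hj => hj.trans h, fun h => ?_⟩
  by_contra hxy
  rw [hanti, le_iff_compact_le_imp] at hxy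
  push Not at hxy
  obtain ⟨k, hk, hky, hkx⟩ := hxy
  obtain ⟨m, hxm, hm⟩ := exists_maximal_not_le_of_isCompactElement hk hkx
  have hmx : c m ≤ x := (apply_le_comm hc hanti _ _).1 hxm
  have hmy : c m ≤ y := h _ (completelyJoinIrreducible_apply_of_maximal_not_le hc hanti hm) hmx
  exact hm.1 (hky.trans ((apply_le_comm hc hanti _ _).1 hmy))

end Involution

section Distrib

variable {A : Type*} [CompleteLattice A] {j : A}

theorem CompletelyJoinIrreducible.supPrime
    (hdist : ∀ x y z : A, x ⊓ (y ⊔ z) = (x ⊓ y) ⊔ (x ⊓ z)) (hj : CompletelyJoinIrreducible j) :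
    SupPrime j := by
  refine ⟨fun hmin => ?_, fun a b hab => ?_⟩
  · exact (hj ∅ (by rw [sSup_empty, hmin.eq_bot])).elim
  · have hjab : j = sSup {j ⊓ a, j ⊓ b} := by rw [sSup_pair, ← hdist, inf_eq_left.2 hab]
    rcases hj _ hjab with h | h
    · exact Or.inl (inf_eq_left.1 h.symm)
    · exact Or.inr (inf_eq_left.1 h.symm)

theorem CompletelyJoinIrreducible.isCompactElement [IsCompactlyGenerated A]
    (hj : CompletelyJoinIrreducible j) : IsCompactElement j := by
  obtain ⟨s, hs, hsup⟩ := IsCompactlyGenerated.exists_sSup_eq j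
  exact hs j (hj s hsup.symm)

theorem CompletelyJoinIrreducible.exists_le_of_le_sSup [IsCompactlyGenerated A]
    (hdist : ∀ x y z : A, x ⊓ (y ⊔ z) = (x ⊓ y) ⊔ (x ⊓ z)) (hj : CompletelyJoinIrreducible j)
    {S : Set A} (h : j ≤ sSup S) : ∃ s ∈ S, j ≤ s := by
  obtain ⟨t, htS, hjt⟩ :=
    (CompleteLattice.isCompactElement_iff_exists_le_sSup_of_le_sSup A j).1 hj.isCompactElement S h
  obtain ⟨s, hst, hjs⟩ := ((hj.supPrime hdist).le_finset_sup).1 hjt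
  exact ⟨s, htS hst, hjs⟩

variable [IsCompactlyGenerated A] {c : A → A}

theorem star_le_iff_not_le (hdist : ∀ x y z : A, x ⊓ (y ⊔ z) = (x ⊓ y) ⊔ (x ⊓ z))
    (hc : Function.Involutive c) (hanti : ∀ x y : A, x ≤ y ↔ c y ≤ c x)
    (hj : CompletelyJoinIrreducible j) {y : A} : star c j ≤ y ↔ ¬ y ≤ c j := by
  refine ⟨fun h hy => ?_, fun hy => sInf_le hy⟩
  have hj' : j ≤ sSup (c '' {x | ¬ x ≤ c j}) := by
    rw [← apply_sInf_eq_sSup_image hc hanti, le_apply_comm hc hanti]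
    exact h.trans hy
  obtain ⟨_, ⟨x, hx, rfl⟩, hjx⟩ := hj.exists_le_of_le_sSup hdist hj'
  exact hx ((le_apply_comm hc hanti _ _).1 hjx)

theorem CompletelyJoinIrreducible.completelyJoinIrreducible_star
    (hdist : ∀ x y z : A, x ⊓ (y ⊔ z) = (x ⊓ y) ⊔ (x ⊓ z))
    (hc : Function.Involutive c) (hanti : ∀ x y : A, x ≤ y ↔ c y ≤ c x)
    (hj : CompletelyJoinIrreducible j) : CompletelyJoinIrreducible (star c j) := by
  intro S hS
  have hS' : ¬ sSup S ≤ c j := (star_le_iff_not_le hdist hc hanti hj).1 hS.le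
  obtain ⟨s, hs, hsj⟩ : ∃ s ∈ S, ¬ s ≤ c j := by
    by_contra! h
    exact hS' (sSup_le h)
  have hs_eq : star c j = s :=
    le_antisymm ((star_le_iff_not_le hdist hc hanti hj).2 hsj) (hS ▸ le_sSup hs)
  exact hs_eq ▸ hs

end Distrib

section JoinExtension

variable {L K : Type*} [CompleteLattice L] [CompleteLattice K] {φ : L → K}

/-- `Φ x = ⋁ φ(J(x))` in the paper's notation. -/
def joinExtension (φ : L → K) (x : L) : K :=
  sSup (φ '' {j | CompletelyJoinIrreducible j ∧ j ≤ x})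

theorem le_joinExtension_iff [IsCompactlyGenerated K]
    (hdistK : ∀ x y z : K, x ⊓ (y ⊔ z) = (x ⊓ y) ⊔ (x ⊓ z))
    (hφmem : ∀ j : L, CompletelyJoinIrreducible j → CompletelyJoinIrreducible (φ j))
    (hφord : ∀ i j : L, CompletelyJoinIrreducible i → CompletelyJoinIrreducible j →
      (i ≤ j ↔ φ i ≤ φ j))
    {i : L} (hi : CompletelyJoinIrreducible i) (x : L) :
    φ i ≤ joinExtension φ x ↔ i ≤ x := by
  refine ⟨fun h => ?_, fun h => le_sSup ⟨i, ⟨hi, h⟩, rfl⟩⟩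
  obtain ⟨_, ⟨j, ⟨hj, hjx⟩, rfl⟩, hij⟩ := (hφmem i hi).exists_le_of_le_sSup hdistK h
  exact ((hφord i j hi hj).2 hij).trans hjx

theorem joinExtension_le_joinExtension_iff [IsCompactlyGenerated L] [IsCompactlyGenerated K]
    (hdistK : ∀ x y z : K, x ⊓ (y ⊔ z) = (x ⊓ y) ⊔ (x ⊓ z))
    {cL : L → L} (hinvL : Function.Involutive cL) (hantiL : ∀ x y : L, x ≤ y ↔ cL y ≤ cL x)
    (hφmem : ∀ j : L, CompletelyJoinIrreducible j → CompletelyJoinIrreducible (φ j))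
    (hφord : ∀ i j : L, CompletelyJoinIrreducible i → CompletelyJoinIrreducible j →
      (i ≤ j ↔ φ i ≤ φ j))
    {x y : L} : joinExtension φ x ≤ joinExtension φ y ↔ x ≤ y := by
  rw [le_iff_forall_completelyJoinIrreducible_le hinvL hantiL, joinExtension, sSup_le_iff,
    Set.forall_mem_image]
  refine forall_congr' fun j => ?_
  simp only [Set.mem_ofPred_eq, and_imp]
  exact forall_congr' fun hj =>
    imp_congr_right fun _ => le_joinExtension_iff hdistK hφmem hφord hj y

theorem joinExtension_surjective [IsCompactlyGenerated L] [IsCompactlyGenerated K]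
    (hdistL : ∀ x y z : L, x ⊓ (y ⊔ z) = (x ⊓ y) ⊔ (x ⊓ z))
    {cK : K → K} (hinvK : Function.Involutive cK) (hantiK : ∀ x y : K, x ≤ y ↔ cK y ≤ cK x)
    (hφord : ∀ i j : L, CompletelyJoinIrreducible i → CompletelyJoinIrreducible j →
      (i ≤ j ↔ φ i ≤ φ j))
    (hφsurj : ∀ k : K, CompletelyJoinIrreducible k →
      ∃ j : L, CompletelyJoinIrreducible j ∧ φ j = k) :
    Function.Surjective (joinExtension φ) := by
  intro y
  refine ⟨sSup {j | CompletelyJoinIrreducible j ∧ φ j ≤ y}, le_antisymm ?_ ?_⟩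
  · refine sSup_le ?_
    rintro _ ⟨i, ⟨hi, hix⟩, rfl⟩
    obtain ⟨j, ⟨hj, hjy⟩, hij⟩ := hi.exists_le_of_le_sSup hdistL hix
    exact ((hφord i j hi hj).1 hij).trans hjy
  · refine (le_iff_forall_completelyJoinIrreducible_le hinvK hantiK).2 fun k hk hky => ?_
    obtain ⟨j, hj, rfl⟩ := hφsurj k hk
    exact le_sSup ⟨j, ⟨hj, le_sSup ⟨hj, hky⟩⟩, rfl⟩

theorem joinExtension_map_involution [IsCompactlyGenerated L] [IsCompactlyGenerated K]
    (hdistL : ∀ x y z : L, x ⊓ (y ⊔ z) = (x ⊓ y) ⊔ (x ⊓ z))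
    (hdistK : ∀ x y z : K, x ⊓ (y ⊔ z) = (x ⊓ y) ⊔ (x ⊓ z))
    {cL : L → L} (hinvL : Function.Involutive cL) (hantiL : ∀ x y : L, x ≤ y ↔ cL y ≤ cL x)
    {cK : K → K} (hinvK : Function.Involutive cK) (hantiK : ∀ x y : K, x ≤ y ↔ cK y ≤ cK x)
    (hφmem : ∀ j : L, CompletelyJoinIrreducible j → CompletelyJoinIrreducible (φ j))
    (hφord : ∀ i j : L, CompletelyJoinIrreducible i → CompletelyJoinIrreducible j →
      (i ≤ j ↔ φ i ≤ φ j))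
    (hφsurj : ∀ k : K, CompletelyJoinIrreducible k →
      ∃ j : L, CompletelyJoinIrreducible j ∧ φ j = k)
    (hφstar : ∀ j : L, CompletelyJoinIrreducible j → φ (star cL j) = star cK (φ j)) (x : L) :
    joinExtension φ (cL x) = cK (joinExtension φ x) := by
  have hle : ∀ k, CompletelyJoinIrreducible k →
      (k ≤ joinExtension φ (cL x) ↔ k ≤ cK (joinExtension φ x)) := by
    intro _ hk
    obtain ⟨i, hi, rfl⟩ := hφsurj _ hk
    calc φ i ≤ joinExtension φ (cL x)
        ↔ i ≤ cL x := le_joinExtension_iff hdistK hφmem hφord hi _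
      _ ↔ x ≤ cL i := le_apply_comm hinvL hantiL _ _
      _ ↔ ¬ star cL i ≤ x := by rw [star_le_iff_not_le hdistL hinvL hantiL hi, not_not]
      _ ↔ ¬ φ (star cL i) ≤ joinExtension φ x := by
        rw [le_joinExtension_iff hdistK hφmem hφord
          (hi.completelyJoinIrreducible_star hdistL hinvL hantiL)]
      _ ↔ joinExtension φ x ≤ cK (φ i) := by
        rw [hφstar i hi, star_le_iff_not_le hdistK hinvK hantiK (hφmem i hi), not_not]
      _ ↔ φ i ≤ cK (joinExtension φ x) := le_apply_comm hinvK hantiK _ _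
  exact le_antisymm
    ((le_iff_forall_completelyJoinIrreducible_le hinvK hantiK).2 fun k hk => (hle k hk).1)
    ((le_iff_forall_completelyJoinIrreducible_le hinvK hantiK).2 fun k hk => (hle k hk).2)

end JoinExtension

/-- If `φ` is an order-isomorphism between the completely join-irreducible elements
of two De Morgan algebras on algebraic lattices commuting with `*`, then
`Φ(x) = ⋁ φ(J(x))` is an isomorphism of De Morgan algebras. -/
theorem deMorgan_iso_of_joinIrreducible_iso
    {L K : Type*} [CompleteLattice L] [IsCompactlyGenerated L]
    [CompleteLattice K] [IsCompactlyGenerated K]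
    (hdistL : ∀ x y z : L, x ⊓ (y ⊔ z) = (x ⊓ y) ⊔ (x ⊓ z))
    (hdistK : ∀ x y z : K, x ⊓ (y ⊔ z) = (x ⊓ y) ⊔ (x ⊓ z))
    (cL : L → L) (hinvL : ∀ x, cL (cL x) = x)
    (hantiL : ∀ x y : L, x ≤ y ↔ cL y ≤ cL x)
    (cK : K → K) (hinvK : ∀ x, cK (cK x) = x)
    (hantiK : ∀ x y : K, x ≤ y ↔ cK y ≤ cK x)
    (φ : L → K)
    (hφmem : ∀ j : L, CompletelyJoinIrreducible j → CompletelyJoinIrreducible (φ j))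
    (hφord : ∀ i j : L, CompletelyJoinIrreducible i → CompletelyJoinIrreducible j →
      (i ≤ j ↔ φ i ≤ φ j))
    (hφsurj : ∀ k : K, CompletelyJoinIrreducible k →
      ∃ j : L, CompletelyJoinIrreducible j ∧ φ j = k)
    (hφstar : ∀ j : L, CompletelyJoinIrreducible j → φ (star cL j) = star cK (φ j)) :
    Function.Bijective (fun x : L => sSup (φ '' {j | CompletelyJoinIrreducible j ∧ j ≤ x})) ∧
    (∀ x y : L, x ≤ y ↔
      sSup (φ '' {j | CompletelyJoinIrreducible j ∧ j ≤ x}) ≤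
        sSup (φ '' {j | CompletelyJoinIrreducible j ∧ j ≤ y})) ∧
    (∀ x : L, sSup (φ '' {j | CompletelyJoinIrreducible j ∧ j ≤ cL x}) =
      cK (sSup (φ '' {j | CompletelyJoinIrreducible j ∧ j ≤ x}))) := by
  have hord : ∀ x y : L, joinExtension φ x ≤ joinExtension φ y ↔ x ≤ y := fun _ _ =>
    joinExtension_le_joinExtension_iff hdistK hinvL hantiL hφmem hφord
  exact ⟨⟨(OrderEmbedding.ofMapLEIff (joinExtension φ) hord).injective,
      joinExtension_surjective hdistL hinvK hantiK hφord hφsurj⟩,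
    fun x y => (hord x y).symm,
    joinExtension_map_involution hdistL hdistK hinvL hantiL hinvK hantiK hφmem hφord hφsurj hφstar⟩
end

section
/- In the construction where U = J (the completely join-irreducibles of a Nelson algebra A on an algebraic lattice) and x R y iff ρ(x) ≤ ρ(y), the quasiorder R is a partial order if and only if R is the identity relation on J, if and only if A is a Boolean algebra. -/
-- `ρ(j) = j` if `j ≤ j*` (i.e. `j ∈ J⁻ ∪ J*`), and `ρ(j) = j*` otherwise.
open Classical in
noncomputable def rho {A : Type*} [CompleteLattice A] (c : A → A) (j : A) : A :=
  if j ≤ star c j then j else star c j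

/-!
If `R` is antisymmetric then `a ⊓ c a = ⊥` for every `a`: otherwise some completely
join-irreducible `j` lies below `a ⊓ c a`, so `j ≤ c j`; the Kleene inequality then gives
`j ≤ j*`, whence `ρ(j*) = ρ(j) = j`, and antisymmetry would give `j = j*` although
`j* ≰ c j`. Conversely, if `A` is Boolean, the Kleene inequality forces `a ⊓ c a = ⊥`, so `c`
is the complement; then `j ≤ j*` for every `j ∈ J`, so `ρ` is the identity on `J`, and `J` is
an antichain because its elements are join-prime.

Both directions rest on two facts about `J`. Its elements are completely join-prime, since a
distributive algebraic lattice satisfies the infinite distributive law. And `J` is join-dense,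
since the completely meet-irreducible elements of an algebraic lattice are meet-dense and `c`
exchanges the two kinds of elements.
-/

def CompletelyMeetIrreducible {A : Type*} [CompleteLattice A] (m : A) : Prop :=
  ∀ S : Set A, m = sInf S → m ∈ S

section Distributive

variable {A : Type*} [CompleteLattice A]
  (hdist : ∀ x y z : A, x ⊓ (y ⊔ z) = (x ⊓ y) ⊔ (x ⊓ z))
include hdist

theorem inf_sSup_le_iSup_inf_of_distrib [IsCompactlyGenerated A] (a : A) (S : Set A) :
    a ⊓ sSup S ≤ ⨆ s ∈ S, a ⊓ s := by
  classical
  rw [inf_sSup_eq_iSup_inf_sup_finset]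
  refine iSup₂_le fun t ht => ?_
  induction t using Finset.induction_on with
  | empty => simp
  | insert s t _ ih =>
    rw [Finset.sup_insert, id, hdist]
    exact sup_le (le_iSup₂_of_le s (ht (Finset.mem_insert_self s t)) le_rfl)
      (ih fun x hx => ht (Finset.mem_insert_of_mem hx))

theorem CompletelyJoinIrreducible.exists_mem_le_of_le_sSup [IsCompactlyGenerated A] {j : A}
    (hj : CompletelyJoinIrreducible j) {S : Set A} (h : j ≤ sSup S) : ∃ s ∈ S, j ≤ s := by
  have hj_eq : j = sSup ((j ⊓ ·) '' S) := by
    rw [sSup_image]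
    exact le_antisymm ((le_inf le_rfl h).trans (inf_sSup_le_iSup_inf_of_distrib hdist j S))
      (iSup₂_le fun _ _ => inf_le_left)
  obtain ⟨s, hs, hjs⟩ := hj _ hj_eq
  exact ⟨s, hs, inf_eq_left.mp hjs⟩

theorem CompletelyJoinIrreducible.le_or_le_of_le_sup [IsCompactlyGenerated A] {j x y : A}
    (hj : CompletelyJoinIrreducible j) (h : j ≤ x ⊔ y) : j ≤ x ∨ j ≤ y := by
  obtain ⟨s, hs, hjs⟩ := hj.exists_mem_le_of_le_sSup hdist (S := {x, y}) (by rwa [sSup_pair])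
  rcases hs with rfl | rfl
  · exact Or.inl hjs
  · exact Or.inr hjs

end Distributive

theorem CompletelyJoinIrreducible.ne_bot {A : Type*} [CompleteLattice A] {j : A}
    (hj : CompletelyJoinIrreducible j) : j ≠ ⊥ := fun h =>
  Set.notMem_empty j (hj ∅ (by rw [h, sSup_empty]))

section MeetIrreducible

variable {A : Type*} [CompleteLattice A]

theorem IsCompactElement.exists_le_maximal_not_le {k b : A} (hk : IsCompactElement k)
    (hkb : ¬ k ≤ b) : ∃ m, b ≤ m ∧ Maximal (fun x => ¬ k ≤ x) m := by
  refine zorn_le_nonempty₀ {x | ¬ k ≤ x} (fun C hC hchain y hy => ?_) b hkb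
  refine ⟨sSup C, fun hkC => ?_, fun z hz => le_sSup hz⟩
  obtain ⟨x, hxC, hkx⟩ := (CompleteLattice.isCompactElement_iff_le_of_directed_sSup_le A k).mp
    hk C ⟨y, hy⟩ hchain.directedOn hkC
  exact hC hxC hkx

theorem completelyMeetIrreducible_of_maximal_not_le {k m : A}
    (hm : Maximal (fun x => ¬ k ≤ x) m) : CompletelyMeetIrreducible m := by
  intro S hS
  by_contra hmS
  refine hm.prop (hS ▸ le_sInf fun x hx => ?_)
  have hmx : m ≤ x := hS ▸ sInf_le hx
  by_contra hkx
  exact hmS (le_antisymm (hm.le_of_ge hkx hmx) hmx ▸ hx)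

theorem exists_completelyMeetIrreducible_of_not_le [IsCompactlyGenerated A] {a b : A}
    (hab : ¬ a ≤ b) : ∃ m, CompletelyMeetIrreducible m ∧ b ≤ m ∧ ¬ a ≤ m := by
  obtain ⟨k, hk, hka, hkb⟩ : ∃ k, IsCompactElement k ∧ k ≤ a ∧ ¬ k ≤ b := by
    simpa [le_iff_compact_le_imp (a := a)] using hab
  obtain ⟨m, hbm, hm⟩ := hk.exists_le_maximal_not_le hkb
  exact ⟨m, completelyMeetIrreducible_of_maximal_not_le hm, hbm, fun ham => hm.prop (hka.trans ham)⟩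

end MeetIrreducible

namespace Nelson

open OrderDual

section Involution

variable {A : Type*} [CompleteLattice A] {c : A → A}
  (hinv : ∀ x, c (c x) = x) (hanti : ∀ x y : A, x ≤ y ↔ c y ≤ c x)
include hinv hanti

def involutionOrderIso : A ≃o Aᵒᵈ where
  toFun x := toDual (c x)
  invFun x := c (ofDual x)
  left_inv := hinv
  right_inv := hinv
  map_rel_iff' := (hanti _ _).symm

theorem le_c_comm {x y : A} : x ≤ c y ↔ y ≤ c x := by
  rw [hanti, hinv]

theorem c_sup (x y : A) : c (x ⊔ y) = c x ⊓ c y :=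
  congrArg ofDual ((involutionOrderIso hinv hanti).map_sup x y)

theorem c_inf (x y : A) : c (x ⊓ y) = c x ⊔ c y :=
  congrArg ofDual ((involutionOrderIso hinv hanti).map_inf x y)

theorem c_bot : c (⊥ : A) = ⊤ :=
  congrArg ofDual (involutionOrderIso hinv hanti).map_bot

theorem c_top : c (⊤ : A) = ⊥ :=
  congrArg ofDual (involutionOrderIso hinv hanti).map_top

theorem c_sSup (S : Set A) : c (sSup S) = sInf (c '' S) := by
  rw [sInf_image]
  exact congrArg ofDual ((involutionOrderIso hinv hanti).map_sSup S)

theorem c_sInf (S : Set A) : c (sInf S) = sSup (c '' S) := by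
  rw [sSup_image]
  exact congrArg ofDual ((involutionOrderIso hinv hanti).map_sInf S)

theorem sup_c_eq_top_of_inf_c_eq_bot {a : A} (h : a ⊓ c a = ⊥) : a ⊔ c a = ⊤ := by
  rw [← hinv (a ⊔ c a), c_sup hinv hanti, hinv, inf_comm, h, c_bot hinv hanti]

theorem _root_.CompletelyMeetIrreducible.completelyJoinIrreducible_c {m : A}
    (hm : CompletelyMeetIrreducible m) : CompletelyJoinIrreducible (c m) := by
  intro S hS
  obtain ⟨s, hs, hsm⟩ := hm (c '' S) (by rw [← c_sSup hinv hanti, ← hS, hinv])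
  rwa [← hsm, hinv]

theorem exists_completelyJoinIrreducible_le_not_le [IsCompactlyGenerated A] {a b : A}
    (hab : ¬ a ≤ b) : ∃ j, CompletelyJoinIrreducible j ∧ j ≤ a ∧ ¬ j ≤ b := by
  obtain ⟨m, hm, hbm, ham⟩ :=
    exists_completelyMeetIrreducible_of_not_le (a := c b) (b := c a) (by rwa [← hanti])
  refine ⟨c m, hm.completelyJoinIrreducible_c hinv hanti, (hanti _ _).mpr (by rwa [hinv]),
    fun h => ham ?_⟩
  simpa only [hinv] using (hanti _ _).mp h

end Involution

theorem rho_eq_self_of_le_star {A : Type*} [CompleteLattice A] {c : A → A} {j : A}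
    (h : j ≤ star c j) : rho c j = j :=
  if_pos h

section Star

variable {A : Type*} [CompleteLattice A] [IsCompactlyGenerated A]
  (hdist : ∀ x y z : A, x ⊓ (y ⊔ z) = (x ⊓ y) ⊔ (x ⊓ z))
  {c : A → A} (hinv : ∀ x, c (c x) = x) (hanti : ∀ x y : A, x ≤ y ↔ c y ≤ c x)
include hdist hinv hanti

theorem star_not_le_c {j : A} (hj : CompletelyJoinIrreducible j) : ¬ star c j ≤ c j := by
  intro h
  have hj_le : j ≤ sSup (c '' {x | ¬ x ≤ c j}) := by
    rw [← c_sInf hinv hanti]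
    exact (le_c_comm hinv hanti).mp h
  obtain ⟨_, ⟨x, hx, rfl⟩, hjx⟩ := hj.exists_mem_le_of_le_sSup hdist hj_le
  exact hx ((le_c_comm hinv hanti).mp hjx)

theorem completelyJoinIrreducible_star {j : A} (hj : CompletelyJoinIrreducible j) :
    CompletelyJoinIrreducible (star c j) := by
  intro S hS
  by_contra hS_not
  refine star_not_le_c hdist hinv hanti hj (hS ▸ sSup_le fun s hs => ?_)
  by_contra hs_not
  have hs_eq : s = star c j := le_antisymm (hS ▸ le_sSup hs) (sInf_le hs_not)
  exact hS_not (hs_eq ▸ hs)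

theorem star_star_eq {j : A} (hj : CompletelyJoinIrreducible j) : star c (star c j) = j := by
  refine le_antisymm (sInf_le fun h => star_not_le_c hdist hinv hanti hj ?_) ?_
  · exact (le_c_comm hinv hanti).mp h
  · refine le_sInf fun x hx => ?_
    by_contra hjx
    exact hx ((le_c_comm hinv hanti).mpr (sInf_le fun hcx => hjx ((hanti j x).mpr hcx)))

theorem le_star_of_forall_le_sup_c {j : A} (hj : CompletelyJoinIrreducible j)
    (h : ∀ x, j ≤ x ⊔ c x) : j ≤ star c j :=
  le_sInf fun x hx => (hj.le_or_le_of_le_sup hdist (h x)).resolve_right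
    fun hjx => hx ((le_c_comm hinv hanti).mp hjx)

theorem rho_star_eq {j : A} (hj : CompletelyJoinIrreducible j) (h : j ≤ star c j) :
    rho c (star c j) = j := by
  unfold rho
  rw [star_star_eq hdist hinv hanti hj]
  split_ifs with h'
  · exact le_antisymm h' h
  · rfl

end Star

section Kleene

variable {A : Type*} [CompleteLattice A]
  (hdist : ∀ x y z : A, x ⊓ (y ⊔ z) = (x ⊓ y) ⊔ (x ⊓ z))
  {c : A → A} (hinv : ∀ x, c (c x) = x) (hanti : ∀ x y : A, x ≤ y ↔ c y ≤ c x)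
  (hkl : ∀ x y : A, x ⊓ c x ≤ y ⊔ c y)
include hdist hinv hanti hkl

theorem le_star_of_le_c [IsCompactlyGenerated A] {j : A} (hj : CompletelyJoinIrreducible j)
    (hjc : j ≤ c j) : j ≤ star c j :=
  le_star_of_forall_le_sup_c hdist hinv hanti hj fun x => (inf_eq_left.mpr hjc).ge.trans (hkl j x)

theorem inf_c_eq_bot_of_rho_antisymm [IsCompactlyGenerated A]
    (hR : ∀ x y : A, CompletelyJoinIrreducible x → CompletelyJoinIrreducible y →
      rho c x ≤ rho c y → rho c y ≤ rho c x → x = y) (a : A) : a ⊓ c a = ⊥ := by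
  by_contra hne
  obtain ⟨j, hj, hja, -⟩ :=
    exists_completelyJoinIrreducible_le_not_le hinv hanti (b := ⊥) (mt le_bot_iff.mp hne)
  have hjc : j ≤ c j := hja.trans (inf_le_right.trans ((hanti _ _).mp (hja.trans inf_le_left)))
  have hj_star : j ≤ star c j := le_star_of_le_c hdist hinv hanti hkl hj hjc
  have hrho : rho c (star c j) = rho c j := by
    rw [rho_star_eq hdist hinv hanti hj hj_star, rho_eq_self_of_le_star hj_star]
  have hj_eq : j = star c j :=
    hR _ _ hj (completelyJoinIrreducible_star hdist hinv hanti hj) hrho.ge hrho.le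
  exact star_not_le_c hdist hinv hanti hj (by rwa [← hj_eq])

theorem eq_bot_of_le_c_of_compl {e e' : A} (he : e ≤ c e) (hsup : e ⊔ e' = ⊤)
    (hinf : e ⊓ e' = ⊥) : e = ⊥ := by
  have he_le : e ≤ c e' := calc
    e = e ⊓ (e' ⊔ c e') := (inf_eq_left.mpr ((inf_eq_left.mpr he).ge.trans (hkl e e'))).symm
    _ = e ⊓ c e' := by rw [hdist, hinf, bot_sup_eq]
    _ ≤ c e' := inf_le_right
  have : e ≤ c (e ⊔ e') := by
    rw [c_sup hinv hanti]
    exact le_inf he he_le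
  rwa [hsup, c_top hinv hanti, le_bot_iff] at this

theorem inf_c_eq_bot_of_complemented (hB : ∀ a : A, ∃ b, a ⊔ b = ⊤ ∧ a ⊓ b = ⊥) (a : A) :
    a ⊓ c a = ⊥ := by
  obtain ⟨b, hsup, hinf⟩ := hB (a ⊓ c a)
  refine eq_bot_of_le_c_of_compl hdist hinv hanti hkl ?_ hsup hinf
  rw [c_inf hinv hanti, hinv]
  exact le_sup_of_le_right inf_le_left

end Kleene

theorem rho_le_rho_iff_eq {A : Type*} [CompleteLattice A] [IsCompactlyGenerated A]
    (hdist : ∀ x y z : A, x ⊓ (y ⊔ z) = (x ⊓ y) ⊔ (x ⊓ z))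
    {c : A → A} (hinv : ∀ x, c (c x) = x) (hanti : ∀ x y : A, x ≤ y ↔ c y ≤ c x)
    (hbot : ∀ a, a ⊓ c a = ⊥) {x y : A} (hx : CompletelyJoinIrreducible x)
    (hy : CompletelyJoinIrreducible y) : rho c x ≤ rho c y ↔ x = y := by
  have hle_sup : ∀ j a : A, j ≤ a ⊔ c a := fun j a => by
    rw [sup_c_eq_top_of_inf_c_eq_bot hinv hanti (hbot a)]
    exact le_top
  have hrho : ∀ j, CompletelyJoinIrreducible j → rho c j = j := fun j hj =>
    rho_eq_self_of_le_star (le_star_of_forall_le_sup_c hdist hinv hanti hj (hle_sup j))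
  rw [hrho x hx, hrho y hy]
  refine ⟨fun hxy => ?_, fun h => h ▸ le_rfl⟩
  rcases hy.le_or_le_of_le_sup hdist (hle_sup y x) with hyx | hycx
  · exact le_antisymm hxy hyx
  · exact absurd (le_bot_iff.mp (hbot x ▸ le_inf le_rfl (hxy.trans hycx))) hx.ne_bot

end Nelson

theorem nelson_partial_order_iff_boolean_general {A : Type*}
    [CompleteLattice A] [IsCompactlyGenerated A]
    (hdist : ∀ x y z : A, x ⊓ (y ⊔ z) = (x ⊓ y) ⊔ (x ⊓ z))
    (c : A → A) (hinv : ∀ x, c (c x) = x)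
    (hanti : ∀ x y : A, x ≤ y ↔ c y ≤ c x)
    (hkl : ∀ x y : A, x ⊓ c x ≤ y ⊔ c y) :
    ((∀ x y : A, CompletelyJoinIrreducible x → CompletelyJoinIrreducible y →
        rho c x ≤ rho c y → rho c y ≤ rho c x → x = y) ↔
      (∀ x y : A, CompletelyJoinIrreducible x → CompletelyJoinIrreducible y →
        (rho c x ≤ rho c y ↔ x = y))) ∧
    ((∀ x y : A, CompletelyJoinIrreducible x → CompletelyJoinIrreducible y →
        (rho c x ≤ rho c y ↔ x = y)) ↔
      (∀ a : A, ∃ b : A, a ⊔ b = ⊤ ∧ a ⊓ b = ⊥)) := by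
  have identity_of_inf_c_eq_bot (hbot : ∀ a, a ⊓ c a = ⊥) :
      ∀ x y : A, CompletelyJoinIrreducible x → CompletelyJoinIrreducible y →
        (rho c x ≤ rho c y ↔ x = y) := fun _ _ hx hy =>
    Nelson.rho_le_rho_iff_eq hdist hinv hanti hbot hx hy
  have boolean_of_inf_c_eq_bot (hbot : ∀ a, a ⊓ c a = ⊥) (a : A) :
      ∃ b : A, a ⊔ b = ⊤ ∧ a ⊓ b = ⊥ :=
    ⟨c a, Nelson.sup_c_eq_top_of_inf_c_eq_bot hinv hanti (hbot a), hbot a⟩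
  have antisymm_of_identity (hI : ∀ x y : A, CompletelyJoinIrreducible x →
      CompletelyJoinIrreducible y → (rho c x ≤ rho c y ↔ x = y)) :
      ∀ x y : A, CompletelyJoinIrreducible x → CompletelyJoinIrreducible y →
        rho c x ≤ rho c y → rho c y ≤ rho c x → x = y := fun x y hx hy hxy _ =>
    (hI x y hx hy).mp hxy
  have inf_c_eq_bot_of_antisymm := Nelson.inf_c_eq_bot_of_rho_antisymm hdist hinv hanti hkl
  exact ⟨⟨fun hR => identity_of_inf_c_eq_bot (inf_c_eq_bot_of_antisymm hR), antisymm_of_identity⟩,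
    ⟨fun hI => boolean_of_inf_c_eq_bot (inf_c_eq_bot_of_antisymm (antisymm_of_identity hI)),
      fun hB => identity_of_inf_c_eq_bot
        (Nelson.inf_c_eq_bot_of_complemented hdist hinv hanti hkl hB)⟩⟩

/-- In the construction `x R y ↔ ρ(x) ≤ ρ(y)` on the completely join-irreducible
elements of a Nelson algebra on an algebraic lattice: `R` is a partial order iff
`R` is the identity relation on `J`, iff `A` is a Boolean algebra. -/
theorem nelson_partial_order_iff_boolean {A : Type*}
    [CompleteLattice A] [IsCompactlyGenerated A]
    (hdist : ∀ x y z : A, x ⊓ (y ⊔ z) = (x ⊓ y) ⊔ (x ⊓ z))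
    (c : A → A) (hinv : ∀ x, c (c x) = x)
    (hanti : ∀ x y : A, x ≤ y ↔ c y ≤ c x)
    (hkl : ∀ x y : A, x ⊓ c x ≤ y ⊔ c y)
    (arrow : A → A → A)
    (hN1 : ∀ a, arrow a a = ⊤)
    (hN2 : ∀ a b, (c a ⊔ b) ⊓ arrow a b = c a ⊔ b)
    (hN3 : ∀ a b, a ⊓ arrow a b = a ⊓ (c a ⊔ b))
    (hN4 : ∀ a b d, arrow a (b ⊓ d) = arrow a b ⊓ arrow a d)
    (hN5 : ∀ a b d, arrow (a ⊓ b) d = arrow a (arrow b d)) :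
    ((∀ x y : A, CompletelyJoinIrreducible x → CompletelyJoinIrreducible y →
        rho c x ≤ rho c y → rho c y ≤ rho c x → x = y) ↔
      (∀ x y : A, CompletelyJoinIrreducible x → CompletelyJoinIrreducible y →
        (rho c x ≤ rho c y ↔ x = y))) ∧
    ((∀ x y : A, CompletelyJoinIrreducible x → CompletelyJoinIrreducible y →
        (rho c x ≤ rho c y ↔ x = y)) ↔
      (∀ a : A, ∃ b : A, a ⊔ b = ⊤ ∧ a ⊓ b = ⊥)) :=
  nelson_partial_order_iff_boolean_general hdist c hinv hanti hkl
end
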